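/- Let N be a positive integer and let f : ZMod N → ℂ be nonzero. Then |supp f| · |supp 𝓕 f| = N if and only if there exist a nonzero c ∈ ℂ, elements a, b : ZMod N, and an additive subgroup H of ZMod N such that f(x) = c · exp(2πi·b̄·x̄/N) for all x ∈ a + H and f(x) = 0 otherwise. (This is Theorem 3.11 of the paper — w is an extremal bi-partial isometry if and only if w is a bi-shift of a biprojection — specialized to L^∞(ℤ/Nℤ), where bi-shifts of biprojections are nonzero multiples of modulated translates of subgroup indicator functions.) -/

import Mathlib

open Complex Finset

/-- The unitary discrete Fourier transform on `ZMod N`. -/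
noncomputable def dft (N : ℕ) [NeZero N] (f : ZMod N → ℂ) : ZMod N → ℂ :=
  fun k => (((N : ℝ) ^ (-(1/2 : ℝ)) : ℝ) : ℂ) *
    ∑ x : ZMod N, f x *
      Complex.exp (-2 * Real.pi * Complex.I * (k.val : ℂ) * (x.val : ℂ) / (N : ℂ))

/-!
Write `𝓕` for the unnormalised transform (same support as `dft N f`), `ψ` for the standard
character, `A`, `B` for the supports of `f`, `𝓕 f` and `M = max ‖f‖`. The triangle inequality
gives `‖𝓕 f k‖ ≤ |A| M`, and Fourier inversion gives `N M ≤ ∑ k ∈ B, ‖𝓕 f k‖ ≤ |B| |A| M`. If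
`|A| |B| = N` all of these are equalities, so for each `k ∈ B` the terms `ψ (-(x k)) f x`, `x ∈ A`,
of `𝓕 f k` all coincide. For one `b ∈ B` this says `f = c ψ (b ·)` on `A`; comparing with the
other `k ∈ B` gives `(x - a) (k - b) = 0`, so `A - a` lies in the annihilator of the group
generated by `B - b`, and `|H^⊥| |H| = N` forces equality. Conversely, the transform of
`c ψ (b ·) 1_{a + H}` is a multiple of `1_{b + H^⊥}`.
-/

open ZMod (stdAddChar)
open scoped ZMod
open Function (support)

theorem eq_average_of_norm_le_of_norm_sum_eq {ι E : Type*} [NormedAddCommGroup E]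
    [InnerProductSpace ℝ E] {s : Finset ι} {z : ι → E} {M : ℝ} (hz : ∀ i ∈ s, ‖z i‖ ≤ M)
    (hs : ‖∑ i ∈ s, z i‖ = #s * M) {i : ι} (hi : i ∈ s) :
    z i = (#s : ℝ)⁻¹ • ∑ j ∈ s, z j := by
  set m := (#s : ℝ)⁻¹ • ∑ j ∈ s, z j
  have hcard : (#s : ℝ) ≠ 0 := by exact_mod_cast (card_pos.2 ⟨i, hi⟩).ne'
  have hsum : ∑ j ∈ s, z j = (#s : ℝ) • m := by rw [smul_inv_smul₀ hcard]
  have hm : ‖m‖ = M := by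
    rw [hsum, norm_smul, Real.norm_natCast] at hs
    exact mul_left_cancel₀ hcard hs
  have hvar : ∑ j ∈ s, ‖z j - m‖ ^ 2 ≤ 0 := calc
    ∑ j ∈ s, ‖z j - m‖ ^ 2 = ∑ j ∈ s, (‖z j‖ ^ 2 - 2 * inner ℝ (z j) m + ‖m‖ ^ 2) :=
      sum_congr rfl fun j _ => norm_sub_sq_real _ _
    _ = ∑ j ∈ s, ‖z j‖ ^ 2 - #s * M ^ 2 := by
      rw [sum_add_distrib, sum_sub_distrib, ← mul_sum, ← sum_inner, hsum, real_inner_smul_left,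
        real_inner_self_eq_norm_sq, sum_const, nsmul_eq_mul, hm]
      ring
    _ ≤ ∑ j ∈ s, M ^ 2 - #s * M ^ 2 := by
      gcongr with j hj
      exact hz j hj
    _ = 0 := by rw [sum_const, nsmul_eq_mul, sub_self]
  have hzero := (sum_eq_zero_iff_of_nonneg fun j _ => sq_nonneg ‖z j - m‖).1
    (le_antisymm hvar (sum_nonneg fun j _ => sq_nonneg _)) i hi
  rwa [sq_eq_zero_iff, norm_eq_zero, sub_eq_zero] at hzero

lemma ncard_setOf_sub_mem {G : Type*} [AddGroup G] (H : AddSubgroup G) (a : G) :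
    {x | x - a ∈ H}.ncard = Nat.card H := by
  rw [← Nat.card_coe_set_eq]
  exact Nat.card_congr ((Equiv.subRight a).subtypeEquiv fun _ => Iff.rfl)

def AddSubgroup.leftAnnihilator {R : Type*} [Ring R] (H : AddSubgroup R) : AddSubgroup R where
  carrier := {k | ∀ h ∈ H, k * h = 0}
  zero_mem' _ _ := zero_mul _
  add_mem' ha hb h hh := by rw [add_mul, ha h hh, hb h hh, add_zero]
  neg_mem' ha h hh := by rw [neg_mul, ha h hh, neg_zero]

namespace AddSubgroup
variable {R : Type*} [Ring R]

lemma mem_leftAnnihilator {H : AddSubgroup R} {k : R} :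
    k ∈ H.leftAnnihilator ↔ ∀ h ∈ H, k * h = 0 := Iff.rfl

lemma mem_leftAnnihilator_closure {S : Set R} {k : R} (hS : ∀ s ∈ S, k * s = 0) :
    k ∈ (closure S).leftAnnihilator := fun _ hh =>
  (closure_le (AddMonoidHom.mulLeft k).ker).2 hS hh

lemma card_leftAnnihilator_mul_card {N : ℕ} [NeZero N] (H : AddSubgroup (ZMod N)) :
    Nat.card H.leftAnnihilator * Nat.card H = N := by
  obtain ⟨g, hg⟩ := (isAddCyclic_iff_exists_zmultiples_eq_top).1 (inferInstance : IsAddCyclic H)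
  have hH : H = zmultiples (g : ZMod N) := by
    have := congrArg (map H.subtype) hg
    rwa [AddMonoidHom.map_zmultiples, ← AddMonoidHom.range_eq_map, range_subtype, eq_comm] at this
  have hker : (AddMonoidHom.mulRight (g : ZMod N)).ker = H.leftAnnihilator := by
    ext k
    simp only [AddMonoidHom.mem_ker, AddMonoidHom.coe_mulRight, mem_leftAnnihilator, hH,
      mem_zmultiples_iff, forall_exists_index, forall_apply_eq_imp_iff]
    exact ⟨fun hk n => by rw [mul_smul_comm, hk, smul_zero], fun hk => by simpa using hk 1⟩
  have hrange : (AddMonoidHom.mulRight (g : ZMod N)).range = H := by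
    ext x
    simp only [AddMonoidHom.mem_range, AddMonoidHom.coe_mulRight, hH, mem_zmultiples_iff]
    constructor
    · rintro ⟨k, rfl⟩
      exact ⟨k.cast, by rw [zsmul_eq_mul, ZMod.intCast_cast, ZMod.cast_id', id]⟩
    · rintro ⟨n, rfl⟩
      exact ⟨n, (zsmul_eq_mul (g : ZMod N) n).symm⟩
  have h := card_mul_index (AddMonoidHom.mulRight (g : ZMod N)).ker
  rwa [index_ker, hrange, hker, Nat.card_zmod] at h
end AddSubgroup

section
variable {N : ℕ} [NeZero N]

lemma stdAddChar_ne_zero (x : ZMod N) : stdAddChar x ≠ 0 := by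
  rw [← norm_ne_zero_iff, AddChar.norm_apply]
  exact one_ne_zero

lemma stdAddChar_eq_one_iff {x : ZMod N} : stdAddChar x = 1 ↔ x = 0 := by
  rw [← AddChar.map_zero_eq_one (stdAddChar (N := N)), ZMod.injective_stdAddChar.eq_iff]

lemma stdAddChar_mul_eq_exp (b x : ZMod N) :
    stdAddChar (b * x) = exp (2 * Real.pi * I * (b.val : ℂ) * (x.val : ℂ) / (N : ℂ)) := by
  have hbx : b * x = ((b.val * x.val : ℕ) : ZMod N) := by simp
  rw [hbx, ZMod.stdAddChar_apply, ZMod.toCircle_natCast]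
  push_cast
  ring_nf

open scoped Classical in
lemma sum_stdAddChar_mul_subgroup (H : AddSubgroup (ZMod N)) (m : ZMod N) :
    ∑ h : H, stdAddChar (m * (h : ZMod N)) =
      if m ∈ H.leftAnnihilator then (Nat.card H : ℂ) else 0 := by
  have h := AddChar.sum_eq_ite
    (stdAddChar.compAddMonoidHom ((AddMonoidHom.mulLeft m).comp H.subtype))
  simp only [AddChar.compAddMonoidHom_apply, AddMonoidHom.comp_apply, H.coe_subtype,
    AddMonoidHom.coe_mulLeft] at h
  rw [h, Nat.card_eq_fintype_card]
  refine if_congr ?_ rfl rfl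
  simp only [AddChar.eq_zero_iff, AddChar.compAddMonoidHom_apply, AddMonoidHom.comp_apply,
    H.coe_subtype, AddMonoidHom.coe_mulLeft, stdAddChar_eq_one_iff, Subtype.forall,
    AddSubgroup.mem_leftAnnihilator]

lemma dft_eq_smul_dft (f : ZMod N → ℂ) :
    dft N f = (((N : ℝ) ^ (-(1/2 : ℝ)) : ℝ) : ℂ) • 𝓕 f := by
  ext k
  simp only [dft, Pi.smul_apply, ZMod.dft_apply, smul_eq_mul]
  congr 1
  refine Finset.sum_congr rfl fun x _ => ?_
  rw [mul_comm, AddChar.map_neg_eq_inv, mul_comm x, stdAddChar_mul_eq_exp, ← Complex.exp_neg]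
  ring_nf

lemma support_dft (f : ZMod N → ℂ) : support (dft N f) = support (𝓕 f) := by
  rw [dft_eq_smul_dft]
  refine Function.support_const_smul_of_ne_zero _ _ ?_
  exact_mod_cast (Real.rpow_pos_of_pos (by exact_mod_cast (NeZero.pos N)) _).ne'

lemma norm_dft_le_sum_norm {E : Type*} [NormedAddCommGroup E] [NormedSpace ℂ E]
    (Φ : ZMod N → E) (k : ZMod N) : ‖𝓕 Φ k‖ ≤ ∑ j, ‖Φ j‖ := by
  rw [ZMod.dft_apply]
  refine (norm_sum_le _ _).trans_eq (sum_congr rfl fun j _ => ?_)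
  rw [norm_smul, AddChar.norm_apply, one_mul]

lemma natCast_mul_norm_le_sum_norm_dft {E : Type*} [NormedAddCommGroup E] [NormedSpace ℂ E]
    (Φ : ZMod N → E) (j : ZMod N) : N * ‖Φ j‖ ≤ ∑ k, ‖𝓕 Φ k‖ := by
  have h := congrFun (ZMod.dft_dft Φ) (-j)
  rw [neg_neg] at h
  calc (N : ℝ) * ‖Φ j‖ = ‖(N : ℂ) • Φ j‖ := by rw [norm_smul, Complex.norm_natCast]
    _ = ‖𝓕 (𝓕 Φ) (-j)‖ := by rw [h]
    _ ≤ ∑ k, ‖𝓕 Φ k‖ := norm_dft_le_sum_norm _ _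

open scoped Classical in
noncomputable def biShift (c : ℂ) (a b : ZMod N) (H : AddSubgroup (ZMod N)) : ZMod N → ℂ :=
  fun x => if x - a ∈ H then c * stdAddChar (b * x) else 0

def IsBiShift (f : ZMod N → ℂ) : Prop :=
  ∃ (c : ℂ) (_ : c ≠ 0) (a b : ZMod N) (H : AddSubgroup (ZMod N)), f = biShift c a b H

lemma eq_biShift_iff {f : ZMod N → ℂ} {c : ℂ} {a b : ZMod N} {H : AddSubgroup (ZMod N)} :
    f = biShift c a b H ↔
      ∀ x, (x - a ∈ H → f x = c * stdAddChar (b * x)) ∧ (x - a ∉ H → f x = 0) := by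
  refine funext_iff.trans (forall_congr' fun x => ?_)
  by_cases hx : x - a ∈ H <;> simp [biShift, hx]

open scoped Classical in
lemma dft_biShift (c : ℂ) (a b : ZMod N) (H : AddSubgroup (ZMod N)) (k : ZMod N) :
    𝓕 (biShift c a b H) k =
      if k - b ∈ H.leftAnnihilator then c * stdAddChar ((b - k) * a) * Nat.card H else 0 := by
  have hterm : ∀ u, stdAddChar (-((a + u) * k)) • biShift c a b H (a + u) =
      if u ∈ H then c * stdAddChar ((b - k) * a) * stdAddChar ((b - k) * u) else 0 := fun u => by
    simp only [biShift, add_sub_cancel_left, smul_eq_mul]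
    split_ifs
    · rw [mul_left_comm, ← AddChar.map_add_eq_mul, mul_assoc, ← AddChar.map_add_eq_mul]
      congr 2
      ring
    · rw [mul_zero]
  calc 𝓕 (biShift c a b H) k = ∑ u, stdAddChar (-((a + u) * k)) • biShift c a b H (a + u) :=
        (Fintype.sum_equiv (Equiv.addLeft a) _ _ fun _ => rfl).symm
    _ = c * stdAddChar ((b - k) * a) * ∑ h : H, stdAddChar ((b - k) * (h : ZMod N)) := by
        rw [sum_congr rfl fun u _ => hterm u, ← sum_filter, mul_sum]
        exact sum_subtype _ (fun u => by simp) _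
    _ = _ := by
        rw [sum_stdAddChar_mul_subgroup, ← neg_sub, neg_mem_iff]
        split_ifs <;> ring

theorem ncard_support_mul_ncard_support_dft_biShift {c : ℂ} (hc : c ≠ 0) (a b : ZMod N)
    (H : AddSubgroup (ZMod N)) :
    (support (biShift c a b H)).ncard * (support (𝓕 (biShift c a b H))).ncard = N := by
  have hf : support (biShift c a b H) = {x | x - a ∈ H} := by
    ext x
    by_cases hx : x - a ∈ H <;> simp [biShift, hx, hc, stdAddChar_ne_zero]
  have hdft : support (𝓕 (biShift c a b H)) = {k | k - b ∈ H.leftAnnihilator} := by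
    ext k
    by_cases hk : k - b ∈ H.leftAnnihilator <;>
      simp [dft_biShift, hk, hc, Nat.card_pos.ne', stdAddChar_ne_zero]
  rw [hf, hdft, ncard_setOf_sub_mem, ncard_setOf_sub_mem, mul_comm,
    AddSubgroup.card_leftAnnihilator_mul_card]

lemma norm_dft_eq_of_ncard_mul_ncard_eq {f : ZMod N → ℂ} {x₀ : ZMod N}
    (hmax : ∀ x, ‖f x‖ ≤ ‖f x₀‖) (hN : (support f).ncard * (support (𝓕 f)).ncard = N)
    {k : ZMod N} (hk : k ∈ support (𝓕 f)) : ‖𝓕 f k‖ = (support f).ncard * ‖f x₀‖ := by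
  classical
  set A := (support f).toFinset
  set B := (support (𝓕 f)).toFinset
  have hAB : #A * #B = N := by
    rw [← Set.ncard_eq_toFinset_card', ← Set.ncard_eq_toFinset_card', hN]
  rw [Set.ncard_eq_toFinset_card']
  have hle : ∀ k, ‖𝓕 f k‖ ≤ #A * ‖f x₀‖ := fun k => calc
    ‖𝓕 f k‖ ≤ ∑ x, ‖f x‖ := norm_dft_le_sum_norm f k
    _ = ∑ x ∈ A, ‖f x‖ := (sum_subset (subset_univ _) fun x _ hx => by simpa [A] using hx).symm
    _ ≤ #A * ‖f x₀‖ := by simpa using sum_le_card_nsmul A _ _ fun x _ => hmax x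
  have hge : ∑ k ∈ B, (#A * ‖f x₀‖) ≤ ∑ k ∈ B, ‖𝓕 f k‖ := calc
    ∑ k ∈ B, (#A * ‖f x₀‖) = N * ‖f x₀‖ := by
      rw [sum_const, nsmul_eq_mul, ← mul_assoc, ← Nat.cast_mul, Nat.mul_comm, hAB]
    _ ≤ ∑ k, ‖𝓕 f k‖ := natCast_mul_norm_le_sum_norm_dft f x₀
    _ = ∑ k ∈ B, ‖𝓕 f k‖ := (sum_subset (subset_univ _) fun k _ hk => by simpa [B] using hk).symm
  exact (sum_eq_sum_iff_of_le fun k _ => hle k).1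
    (le_antisymm (sum_le_sum fun k _ => hle k) hge) k (by simpa [B] using hk)

lemma stdAddChar_mul_eq_of_ncard_mul_ncard_eq {f : ZMod N → ℂ} {x₀ : ZMod N}
    (hmax : ∀ x, ‖f x‖ ≤ ‖f x₀‖) (hN : (support f).ncard * (support (𝓕 f)).ncard = N)
    {k : ZMod N} (hk : k ∈ support (𝓕 f)) {x y : ZMod N} (hx : x ∈ support f)
    (hy : y ∈ support f) :
    stdAddChar (-(x * k)) * f x = stdAddChar (-(y * k)) * f y := by
  classical
  set A := (support f).toFinset
  have hdft : 𝓕 f k = ∑ x ∈ A, stdAddChar (-(x * k)) * f x :=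
    (sum_subset (subset_univ _) fun x _ hx => by simp_all [A]).symm
  have hle : ∀ x ∈ A, ‖stdAddChar (-(x * k)) * f x‖ ≤ ‖f x₀‖ := fun x _ => by
    rw [norm_mul, AddChar.norm_apply, one_mul]
    exact hmax x
  have hsum : ‖∑ x ∈ A, stdAddChar (-(x * k)) * f x‖ = #A * ‖f x₀‖ := by
    rw [← hdft, norm_dft_eq_of_ncard_mul_ncard_eq hmax hN hk, Set.ncard_eq_toFinset_card']
  rw [eq_average_of_norm_le_of_norm_sum_eq hle hsum (by simpa [A] using hx),
    eq_average_of_norm_le_of_norm_sum_eq hle hsum (by simpa [A] using hy)]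

lemma exists_addSubgroup_eq_setOf_sub_mem {A B : Set (ZMod N)} {a b : ZMod N}
    (hN : N ≤ A.ncard * B.ncard) (hAB : ∀ x ∈ A, ∀ k ∈ B, (x - a) * (k - b) = 0) :
    ∃ H : AddSubgroup (ZMod N), A = {x | x - a ∈ H} := by
  set K := AddSubgroup.closure ((· - b) '' B)
  refine ⟨K.leftAnnihilator, Set.eq_of_subset_of_ncard_le ?_ ?_ (Set.toFinite _)⟩
  · intro x hx
    exact AddSubgroup.mem_leftAnnihilator_closure (by rintro _ ⟨k, hk, rfl⟩; exact hAB x hx k hk)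
  · have hB : B.ncard ≤ Nat.card K := by
      rw [← ncard_setOf_sub_mem K b]
      exact Set.ncard_le_ncard fun k hk => AddSubgroup.subset_closure ⟨k, hk, rfl⟩
    rw [ncard_setOf_sub_mem]
    refine Nat.le_of_mul_le_mul_right ?_ (Nat.card_pos (α := K))
    rw [AddSubgroup.card_leftAnnihilator_mul_card]
    exact hN.trans (Nat.mul_le_mul_left _ hB)

theorem isBiShift_of_ncard_mul_ncard_eq {f : ZMod N → ℂ} (hf : f ≠ 0)
    (hN : (support f).ncard * (support (𝓕 f)).ncard = N) : IsBiShift f := by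
  obtain ⟨x₀, hmax⟩ := Finite.exists_max fun x => ‖f x‖
  have hphase := @stdAddChar_mul_eq_of_ncard_mul_ncard_eq _ _ f x₀ hmax hN
  obtain ⟨a, ha⟩ := Function.support_nonempty_iff.2 hf
  obtain ⟨b, hb⟩ : (support (𝓕 f)).Nonempty :=
    Set.nonempty_of_ncard_ne_zero (right_ne_zero_of_mul (hN ▸ NeZero.ne N))
  set c := stdAddChar (-(a * b)) * f a
  have hc : c ≠ 0 := mul_ne_zero (stdAddChar_ne_zero _) ha
  have hfA : ∀ x ∈ support f, f x = c * stdAddChar (b * x) := fun x hx => calc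
    f x = stdAddChar (-(x * b)) * f x * stdAddChar (b * x) := by
      rw [mul_right_comm, ← AddChar.map_add_eq_mul, mul_comm x, neg_add_cancel,
        AddChar.map_zero_eq_one, one_mul]
    _ = c * stdAddChar (b * x) := by rw [hphase hb hx ha]
  have hAB : ∀ x ∈ support f, ∀ k ∈ support (𝓕 f), (x - a) * (k - b) = 0 := by
    intro x hx k hk
    have h := hphase hk hx ha
    rw [hfA x hx, hfA a ha, mul_left_comm, ← AddChar.map_add_eq_mul, mul_left_comm (stdAddChar _),
      ← AddChar.map_add_eq_mul] at h
    have := ZMod.injective_stdAddChar (mul_left_cancel₀ hc h)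
    linear_combination -this
  obtain ⟨H, hH⟩ := exists_addSubgroup_eq_setOf_sub_mem hN.ge hAB
  refine ⟨c, hc, a, b, H, funext fun x => ?_⟩
  by_cases hx : x - a ∈ H
  · rw [biShift, if_pos hx, hfA x (hH ▸ hx)]
  · rw [biShift, if_neg hx, ← Function.notMem_support, hH]
    exact hx

theorem ncard_support_mul_ncard_support_dft_eq_iff {f : ZMod N → ℂ} (hf : f ≠ 0) :
    (support f).ncard * (support (𝓕 f)).ncard = N ↔ IsBiShift f := by
  refine ⟨isBiShift_of_ncard_mul_ncard_eq hf, ?_⟩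
  rintro ⟨c, hc, a, b, H, rfl⟩
  exact ncard_support_mul_ncard_support_dft_biShift hc a b H

end

/-- A nonzero f on ZMod N saturates the Donoho–Stark uncertainty principle
if and only if f is a bi-shift of a biprojection, i.e. a nonzero multiple of a
modulated translate of the indicator function of a subgroup. -/
theorem extremal_iff_bishift (N : ℕ) [NeZero N] (f : ZMod N → ℂ) (hf : f ≠ 0) :
    (Function.support f).ncard * (Function.support (dft N f)).ncard = N ↔
      ∃ (c : ℂ) (_ : c ≠ 0) (a b : ZMod N) (H : AddSubgroup (ZMod N)),
        ∀ x : ZMod N,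
          (x - a ∈ H →
            f x = c * Complex.exp
              (2 * Real.pi * Complex.I * (b.val : ℂ) * (x.val : ℂ) / (N : ℂ))) ∧
          (x - a ∉ H → f x = 0) := by
  rw [support_dft, ncard_support_mul_ncard_support_dft_eq_iff hf, IsBiShift]
  simp only [eq_biShift_iff, stdAddChar_mul_eq_exp]
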